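/- (Γ-liminf inequality.) Fix initial data i₀ ∈ (0,1), s₀ ∈ (0,1−i₀] and an increasing sequence T_n → ∞. Let (u_n) be controls such that i^{u_n}(t) ≤ i_M for all t, u_n = 0 a.e. on (T_n,∞), and u_n converges weakly* to u in L^∞(0,∞) (i.e. ∫₀^∞ u_n·g dt → ∫₀^∞ u·g dt for every g ∈ L¹(0,∞)). Then i^u(t) ≤ i_M for all t, and liminf_{n→∞} ∫₀^{T_n} (λ₁·u_n + λ₂·i^{u_n}) dt ≥ ∫₀^∞ (λ₁·u + λ₂·i^u) dt. -/

import Mathlib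

open MeasureTheory Filter Set intervalIntegral
open scoped ENNReal

noncomputable section

/-- A control: a measurable (essentially bounded) function with values in `[0, umax]`. -/
def IsControl (umax : ℝ) (u : ℝ → ℝ) : Prop :=
  Measurable u ∧ ∀ t : ℝ, u t ∈ Set.Icc (0 : ℝ) umax

/-- Solution of the controlled SIR system on `[0,∞)`, in integral (i.e. locally absolutely
continuous) form: `s' = -(β-u)·s·i`, `i' = (β-u)·s·i - γ·i` a.e., `s 0 = s₀`, `i 0 = i₀`. -/
def SIRSol (β γ : ℝ) (u s i : ℝ → ℝ) (s₀ i₀ : ℝ) : Prop :=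
  Continuous s ∧ Continuous i ∧
  (∀ t : ℝ, 0 ≤ t → s t = s₀ + ∫ τ in (0:ℝ)..t, -((β - u τ) * s τ * i τ)) ∧
  (∀ t : ℝ, 0 ≤ t → i t = i₀ + ∫ τ in (0:ℝ)..t, ((β - u τ) * s τ * i τ - γ * i τ))

/-- Solution of the controlled SIR system on `[0,T]`, in integral form. -/
def SIRSolOn (β γ T : ℝ) (u s i : ℝ → ℝ) (s₀ i₀ : ℝ) : Prop :=
  ContinuousOn s (Set.Icc 0 T) ∧ ContinuousOn i (Set.Icc 0 T) ∧
  (∀ t ∈ Set.Icc (0:ℝ) T, s t = s₀ + ∫ τ in (0:ℝ)..t, -((β - u τ) * s τ * i τ)) ∧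
  (∀ t ∈ Set.Icc (0:ℝ) T, i t = i₀ + ∫ τ in (0:ℝ)..t, ((β - u τ) * s τ * i τ - γ * i τ))

/-- The triangle `T = {(s,i) ∈ (0,1]² : s + i ≤ 1}`. -/
def Triangle : Set (ℝ × ℝ) :=
  {p | 0 < p.1 ∧ p.1 ≤ 1 ∧ 0 < p.2 ∧ p.2 ≤ 1 ∧ p.1 + p.2 ≤ 1}

/-- The curve `Φ_max`. -/
def PhiMax (β γ umax iM : ℝ) (x : ℝ) : ℝ :=
  if x < γ / (β - umax) then iM
  else γ / (β - umax) + iM - x + (γ / (β - umax)) * (Real.log x - Real.log (γ / (β - umax)))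

/-- The curve `Φ₀`. -/
def Phi0 (β γ iM : ℝ) (x : ℝ) : ℝ :=
  if x < γ / β then iM
  else γ / β + iM - x + (γ / β) * (Real.log x - Real.log (γ / β))

/-- The ICU (state) constraint `i(t) ≤ i_M` for all `t ≥ 0`. -/
def Admissible (iM : ℝ) (i : ℝ → ℝ) : Prop := ∀ t : ℝ, 0 ≤ t → i t ≤ iM

/-- Infinite-horizon cost `J^∞(u) = ∫₀^∞ (λ₁ u + λ₂ i) dt`, with values in `[0,∞]`. -/
def Cost (l1 l2 : ℝ) (u i : ℝ → ℝ) : ℝ≥0∞ :=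
  ∫⁻ t in Set.Ioi (0:ℝ), ENNReal.ofReal (l1 * u t + l2 * i t)

/-- Finite-horizon cost `J^T(u) = ∫₀^T (λ₁ u + λ₂ i) dt`. -/
def CostT (l1 l2 T : ℝ) (u i : ℝ → ℝ) : ℝ≥0∞ :=
  ∫⁻ t in Set.Ioc (0:ℝ) T, ENNReal.ofReal (l1 * u t + l2 * i t)

/-- The safe (no-effort) zone `A`. -/
def SafeZone (β γ iM : ℝ) : Set (ℝ × ℝ) :=
  {p | p ∈ Triangle ∧ ∃ s i : ℝ → ℝ,
    SIRSol β γ (fun _ => 0) s i p.1 p.2 ∧ Admissible iM i}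

/-- The viable (feasible) set `B`. -/
def ViableSet (β γ umax iM : ℝ) : Set (ℝ × ℝ) :=
  {p | p ∈ Triangle ∧ ∃ u s i : ℝ → ℝ, IsControl umax u ∧
    SIRSol β γ u s i p.1 p.2 ∧ Admissible iM i}

/-- Weak* convergence in `L^∞(0,∞)`: testing against every `L¹` function. -/
def WeakStarLim (un : ℕ → ℝ → ℝ) (u : ℝ → ℝ) : Prop :=
  ∀ g : ℝ → ℝ, MeasureTheory.IntegrableOn g (Set.Ioi 0) →
    Filter.Tendsto (fun n => ∫ t in Set.Ioi (0:ℝ), un n t * g t) Filter.atTop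
      (nhds (∫ t in Set.Ioi (0:ℝ), u t * g t))

/-!
The state never leaves the triangle: `s` and `i` each solve a linear integral equation with a
locally bounded coefficient, so by a backward Grönwall argument they cannot reach `0`, while
`s + i` is nonincreasing. Testing the weak* convergence against `1_(0,r] · s i` shows that
`E_n(r) = ∫₀ʳ (u_n - u) s i` tends to `0`; the `E_n` are equi-Lipschitz, so the convergence is
uniform on compact intervals, and Grönwall's inequality for `|s_n - s| + |i_n - i|` yields
`i^{u_n}(t) → i^u(t)`. Hence the state constraint passes to the limit. On a fixed window `(0, M]`
the costs converge (weak* for the control, dominated convergence for `i`), the horizons `T_n`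
eventually exceed `M`, and the infinite-horizon cost is the supremum of the window costs.
-/

open Real
open scoped NNReal Topology

theorem le_mul_exp_of_le_add_mul_integral {φ : ℝ → ℝ} {a b C K : ℝ} (hK : 0 ≤ K)
    (hφ : Continuous φ) (h : ∀ t ∈ Icc a b, φ t ≤ C + K * ∫ τ in a..t, φ τ) :
    ∀ t ∈ Icc a b, φ t ≤ C * exp (K * (t - a)) := by
  set F : ℝ → ℝ := fun t => ∫ τ in a..t, φ τ
  have hF : ∀ x, HasDerivAt F (φ x) x := fun x => (hφ.integral_hasStrictDerivAt a x).hasDerivAt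
  have hFbound : ∀ t ∈ Icc a b, F t ≤ gronwallBound 0 K C (t - a) :=
    le_gronwallBound_of_liminf_deriv_right_le (continuous_iff_continuousAt.2
      fun x => (hF x).continuousAt).continuousOn
      (fun x _ r hr => (hF x).hasDerivWithinAt.liminf_right_slope_le hr) (by simp [F])
      fun x hx => by linarith [h x (Ico_subset_Icc_self hx)]
  intro t ht
  have hφt : φ t ≤ C + K * gronwallBound 0 K C (t - a) :=
    (h t ht).trans (by gcongr; exact hFbound t ht)
  rcases hK.eq_or_lt with rfl | hK
  · simpa using hφt
  · rw [gronwallBound_of_K_ne_0 hK.ne'] at hφt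
    convert hφt using 1
    field_simp
    ring

theorem nonpos_of_le_mul_integral_right {φ : ℝ → ℝ} {a b K : ℝ} (hK : 0 ≤ K)
    (hφ : Continuous φ) (h : ∀ t ∈ Icc a b, φ t ≤ K * ∫ τ in t..b, φ τ) :
    ∀ t ∈ Icc a b, φ t ≤ 0 := by
  have hreflect : ∀ r ∈ Icc a b, a + b - r ∈ Icc a b := fun r hr =>
    ⟨by linarith [hr.2], by linarith [hr.1]⟩
  have hψ : ∀ r ∈ Icc a b, φ (a + b - r) ≤ 0 * exp (K * (r - a)) := by
    refine le_mul_exp_of_le_add_mul_integral hK (hφ.comp (continuous_sub_left _)) fun r hr => ?_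
    rw [zero_add, integral_comp_sub_left φ (a + b), add_sub_cancel_left]
    exact h _ (hreflect r hr)
  intro t ht
  simpa using hψ (a + b - t) (hreflect t ht)

theorem pos_of_eq_add_integral {x f : ℝ → ℝ} {a T x₀ K : ℝ} (hx₀ : 0 < x₀)
    (hx : Continuous x) (hf : IntervalIntegrable f volume a T)
    (hfx : ∀ τ ∈ Icc a T, |f τ| ≤ K * |x τ|)
    (heq : ∀ t ∈ Icc a T, x t = x₀ + ∫ τ in a..t, f τ) :
    ∀ t ∈ Icc a T, 0 < x t := by
  intro t ht
  by_contra! hxt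
  have hxa : x a = x₀ := by simpa using heq a ⟨le_rfl, ht.1.trans ht.2⟩
  obtain ⟨t₁, ht₁, hxt₁⟩ : 0 ∈ x '' Icc a t :=
    intermediate_value_Icc' ht.1 hx.continuousOn ⟨hxt, hxa ▸ hx₀.le⟩
  have hsub : Icc a t₁ ⊆ Icc a T := Icc_subset_Icc_right (ht₁.2.trans ht.2)
  have hK : 0 ≤ K := nonneg_of_mul_nonneg_left
    ((abs_nonneg _).trans (hfx a ⟨le_rfl, ht.1.trans ht.2⟩)) (abs_pos.2 (hxa ▸ hx₀.ne'))
  have hback : ∀ τ ∈ Icc a t₁, |x τ| ≤ K * ∫ σ in τ..t₁, |x σ| := by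
    intro τ hτ
    have hint : ∀ c ∈ Icc a t₁, IntervalIntegrable f volume a c := fun c hc =>
      hf.mono_set (uIcc_subset_uIcc_left (Icc_subset_uIcc (hsub hc)))
    have hxτ : x τ = -∫ σ in τ..t₁, f σ := by
      rw [← integral_interval_sub_left (hint t₁ ⟨ht₁.1, le_rfl⟩) (hint τ hτ)]
      linarith [heq τ (hsub hτ), heq t₁ (hsub ⟨ht₁.1, le_rfl⟩)]
    calc |x τ| = |∫ σ in τ..t₁, f σ| := by rw [hxτ, abs_neg]
      _ ≤ ∫ σ in τ..t₁, |f σ| := abs_integral_le_integral_abs hτ.2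
      _ ≤ ∫ σ in τ..t₁, K * |x σ| := by
          refine integral_mono_on hτ.2 ?_ ((hx.abs.const_mul K).intervalIntegrable _ _)
            fun σ hσ => hfx σ (hsub ⟨hτ.1.trans hσ.1, hσ.2⟩)
          exact (hf.mono_set (uIcc_subset_uIcc (Icc_subset_uIcc (hsub hτ))
            (Icc_subset_uIcc (hsub ⟨ht₁.1, le_rfl⟩)))).abs
      _ = K * ∫ σ in τ..t₁, |x σ| := intervalIntegral.integral_const_mul K _
  have hxa_nonpos := nonpos_of_le_mul_integral_right hK hx.abs hback a ⟨le_rfl, ht₁.1⟩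
  rw [hxa] at hxa_nonpos
  linarith [abs_pos.2 hx₀.ne']

theorem tendstoUniformlyOn_of_lipschitzOnWith {ι X α : Type*} [PseudoMetricSpace X]
    [PseudoMetricSpace α] {F : ι → X → α} {f : X → α} {p : Filter ι} {K : ℝ≥0} {s : Set X}
    (hs : IsCompact s) (hF : ∀ n, LipschitzOnWith K (F n) s)
    (h : ∀ x ∈ s, Tendsto (fun n => F n x) p (𝓝 (f x))) : TendstoUniformlyOn F f p s := by
  have hcont : EquicontinuousOn F s :=
    (LipschitzOnWith.uniformEquicontinuousOn F K hF).equicontinuousOn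
  have := (EquicontinuousOn.tendsto_uniformOnFun_iff_pi' (𝔖 := {s}) (by simpa using hs)
    (by simpa using hcont) p f).2 (by
      rw [sUnion_singleton]
      exact tendsto_pi_nhds.2 fun x : s => h x x.2)
  exact UniformOnFun.tendsto_iff_tendstoUniformlyOn.1 this s rfl

theorem lipschitzOnWith_integral {g : ℝ → ℝ} {a : ℝ} {s : Set ℝ} {K : ℝ≥0} [s.OrdConnected]
    (hg : ∀ b c, IntervalIntegrable g volume b c) (hK : ∀ x ∈ s, |g x| ≤ K) :
    LipschitzOnWith K (fun r => ∫ τ in a..r, g τ) s := by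
  refine LipschitzOnWith.of_dist_le_mul fun x hx y hy => ?_
  rw [dist_eq_norm, integral_interval_sub_left (hg a x) (hg a y), Real.dist_eq]
  exact norm_integral_le_of_norm_le_const fun τ hτ =>
    hK τ (Set.OrdConnected.uIcc_subset ‹_› hy hx (uIoc_subset_uIcc hτ))

theorem abs_integral_sub_integral_le {f g A B : ℝ → ℝ} {a b : ℝ} (hab : a ≤ b)
    (hf : IntervalIntegrable f volume a b) (hg : IntervalIntegrable g volume a b)
    (hA : IntervalIntegrable A volume a b) (hB : IntervalIntegrable B volume a b)
    (hAB : ∀ τ, f τ - g τ = A τ + B τ) :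
    |(∫ τ in a..b, f τ) - ∫ τ in a..b, g τ| ≤ (∫ τ in a..b, |A τ|) + |∫ τ in a..b, B τ| := by
  rw [← integral_sub hf hg, integral_congr fun τ _ => hAB τ, integral_add hA hB]
  exact (abs_add_le _ _).trans (add_le_add_left (abs_integral_le_integral_abs hab) _)

theorem abs_mul_sub_mul_le {a b c d : ℝ} (ha : |a| ≤ 1) (hd : |d| ≤ 1) :
    |a * b - c * d| ≤ |a - c| + |b - d| :=
  calc |a * b - c * d| = |a * (b - d) + d * (a - c)| := by ring_nf
    _ ≤ |a| * |b - d| + |d| * |a - c| := by rw [← abs_mul, ← abs_mul]; exact abs_add_le _ _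
    _ ≤ |b - d| + |a - c| := add_le_add (mul_le_of_le_one_left (abs_nonneg _) ha)
        (mul_le_of_le_one_left (abs_nonneg _) hd)
    _ = |a - c| + |b - d| := add_comm _ _

namespace IsControl

variable {umax : ℝ} {u v : ℝ → ℝ}

theorem umax_nonneg (hu : IsControl umax u) : 0 ≤ umax :=
  (hu.2 0).1.trans (hu.2 0).2

theorem abs_le (hu : IsControl umax u) (t : ℝ) : |u t| ≤ umax :=
  _root_.abs_le.2 ⟨by linarith [(hu.2 t).1, (hu.2 t).2], (hu.2 t).2⟩

theorem abs_sub_le_of_isControl (hu : IsControl umax u) (hv : IsControl umax v) (t : ℝ) :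
    |u t - v t| ≤ umax :=
  _root_.abs_le.2 ⟨by linarith [(hu.2 t).1, (hv.2 t).2], by linarith [(hu.2 t).2, (hv.2 t).1]⟩

theorem abs_sub_mul_le (hu : IsControl umax u) (β t : ℝ) {x y : ℝ} (hxy : |x| ≤ y) :
    |(β - u t) * x| ≤ (|β| + umax) * y := by
  have hβu : |β - u t| ≤ |β| + umax := (abs_sub _ _).trans (by gcongr; exact hu.abs_le t)
  rw [abs_mul]
  exact mul_le_mul hβu hxy (abs_nonneg _) ((abs_nonneg _).trans hβu)

theorem integrableOn (hu : IsControl umax u) {S : Set ℝ} (hS : volume S ≠ ⊤) :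
    IntegrableOn u S :=
  Measure.integrableOn_of_bounded hS hu.1.aestronglyMeasurable (M := umax)
    (ae_of_all _ fun t => hu.abs_le t)

theorem intervalIntegrable (hu : IsControl umax u) (a b : ℝ) :
    IntervalIntegrable u volume a b :=
  intervalIntegrable_iff.2 (hu.integrableOn measure_Ioc_lt_top.ne)

end IsControl

namespace SIRSol

variable {β γ umax s₀ i₀ : ℝ}

section

variable {u s i : ℝ → ℝ}

theorem intervalIntegrable_infection (hu : IsControl umax u) (h : SIRSol β γ u s i s₀ i₀)
    (a b : ℝ) : IntervalIntegrable (fun τ => (β - u τ) * s τ * i τ) volume a b :=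
  ((intervalIntegrable_const.sub (hu.intervalIntegrable a b)).mul_continuousOn
    h.1.continuousOn).mul_continuousOn h.2.1.continuousOn

theorem mem_triangle (hγ : 0 ≤ γ) (hu : IsControl umax u) (h : SIRSol β γ u s i s₀ i₀)
    (h₀ : (s₀, i₀) ∈ Triangle) (t : ℝ) (ht : 0 ≤ t) : (s t, i t) ∈ Triangle := by
  obtain ⟨hsc, hic, hseq, hieq⟩ := h
  obtain ⟨Cs, hCs⟩ :=
    (isCompact_Icc (a := 0) (b := t)).exists_bound_of_continuousOn hsc.continuousOn
  obtain ⟨Ci, hCi⟩ :=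
    (isCompact_Icc (a := 0) (b := t)).exists_bound_of_continuousOn hic.continuousOn
  have hinf := intervalIntegrable_infection hu ⟨hsc, hic, hseq, hieq⟩
  have hs : ∀ τ ∈ Icc 0 t, 0 < s τ :=
    pos_of_eq_add_integral (f := fun τ => -((β - u τ) * s τ * i τ)) h₀.1 hsc (hinf 0 t).neg
      (fun τ hτ => by
        rw [abs_neg, mul_right_comm, abs_mul _ (s τ)]
        exact mul_le_mul_of_nonneg_right (hu.abs_sub_mul_le β τ (hCi τ hτ)) (abs_nonneg _))
      fun τ hτ => hseq τ hτ.1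
  have hi : ∀ τ ∈ Icc 0 t, 0 < i τ :=
    pos_of_eq_add_integral (f := fun τ => (β - u τ) * s τ * i τ - γ * i τ) h₀.2.2.1 hic
      ((hinf 0 t).sub ((hic.const_mul γ).intervalIntegrable _ _))
      (K := (|β| + umax) * Cs + γ)
      (fun τ hτ => by
        calc _ ≤ |(β - u τ) * s τ * i τ| + |γ * i τ| := abs_sub _ _
          _ ≤ (|β| + umax) * Cs * |i τ| + γ * |i τ| := by
              rw [abs_mul _ (i τ), abs_mul γ, abs_of_nonneg hγ]
              gcongr
              exact hu.abs_sub_mul_le β τ (hCs τ hτ)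
          _ = ((|β| + umax) * Cs + γ) * |i τ| := by ring)
      fun τ hτ => hieq τ hτ.1
  have hsum : s t + i t = s₀ + i₀ - γ * ∫ τ in 0..t, i τ := by
    rw [hseq t ht, hieq t ht, ← intervalIntegral.integral_const_mul, intervalIntegral.integral_neg,
      integral_sub (hinf 0 t) ((hic.const_mul γ).intervalIntegrable _ _)]
    ring
  have hγi : 0 ≤ γ * ∫ τ in 0..t, i τ :=
    mul_nonneg hγ (integral_nonneg ht fun τ hτ => (hi τ hτ).le)
  have hst := hs t ⟨ht, le_rfl⟩
  have hit := hi t ⟨ht, le_rfl⟩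
  obtain ⟨-, -, -, -, h₀sum⟩ := h₀
  exact ⟨hst, by linarith, hit, by linarith, by linarith⟩

theorem abs_le_one (hγ : 0 ≤ γ) (hu : IsControl umax u) (h : SIRSol β γ u s i s₀ i₀)
    (h₀ : (s₀, i₀) ∈ Triangle) (t : ℝ) (ht : 0 ≤ t) : |s t| ≤ 1 ∧ |i t| ≤ 1 := by
  obtain ⟨hs0, hs1, hi0, hi1, -⟩ := h.mem_triangle hγ hu h₀ t ht
  exact ⟨abs_le.2 ⟨by linarith, hs1⟩, abs_le.2 ⟨by linarith, hi1⟩⟩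

end

section

variable {v w sv iv sw iw : ℝ → ℝ}

theorem abs_sub_susceptible_le (hv : IsControl umax v) (hw : IsControl umax w)
    (hsolv : SIRSol β γ v sv iv s₀ i₀) (hsolw : SIRSol β γ w sw iw s₀ i₀)
    (hsv : ∀ τ, 0 ≤ τ → |sv τ| ≤ 1) (hiw : ∀ τ, 0 ≤ τ → |iw τ| ≤ 1) {r : ℝ} (hr : 0 ≤ r) :
    |sv r - sw r| ≤ (|β| + umax) * (∫ τ in 0..r, (|sv τ - sw τ| + |iv τ - iw τ|)) +
      |∫ τ in 0..r, (v τ - w τ) * (sw τ * iw τ)| := by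
  have hA : IntervalIntegrable (fun τ => (β - v τ) * (sv τ * iv τ - sw τ * iw τ)) volume 0 r :=
    (intervalIntegrable_const.sub (hv.intervalIntegrable 0 r)).mul_continuousOn
      ((hsolv.1.mul hsolv.2.1).sub (hsolw.1.mul hsolw.2.1)).continuousOn
  rw [hsolv.2.2.1 r hr, hsolw.2.2.1 r hr, add_sub_add_left_eq_sub]
  refine (abs_integral_sub_integral_le (f := fun τ => -((β - v τ) * sv τ * iv τ))
    (g := fun τ => -((β - w τ) * sw τ * iw τ))
    (A := fun τ => -((β - v τ) * (sv τ * iv τ - sw τ * iw τ)))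
    (B := fun τ => (v τ - w τ) * (sw τ * iw τ)) hr
    (hsolv.intervalIntegrable_infection hv 0 r).neg
    (hsolw.intervalIntegrable_infection hw 0 r).neg hA.neg
    (((hv.intervalIntegrable 0 r).sub (hw.intervalIntegrable 0 r)).mul_continuousOn
      (hsolw.1.mul hsolw.2.1).continuousOn) fun τ => by ring).trans
    (add_le_add_left ?_ _)
  rw [← intervalIntegral.integral_const_mul]
  refine integral_mono_on hr hA.neg.abs
    ((((hsolv.1.sub hsolw.1).abs.add (hsolv.2.1.sub hsolw.2.1).abs).const_mul _).intervalIntegrable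
      _ _) fun τ hτ => ?_
  rw [abs_neg]
  exact hv.abs_sub_mul_le β τ (abs_mul_sub_mul_le (hsv τ hτ.1) (hiw τ hτ.1))

theorem abs_sub_infected_le (hγ : 0 ≤ γ) (hv : IsControl umax v) (hw : IsControl umax w)
    (hsolv : SIRSol β γ v sv iv s₀ i₀) (hsolw : SIRSol β γ w sw iw s₀ i₀)
    (hsv : ∀ τ, 0 ≤ τ → |sv τ| ≤ 1) (hiw : ∀ τ, 0 ≤ τ → |iw τ| ≤ 1) {r : ℝ} (hr : 0 ≤ r) :
    |iv r - iw r| ≤ (|β| + umax + γ) * (∫ τ in 0..r, (|sv τ - sw τ| + |iv τ - iw τ|)) +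
      |∫ τ in 0..r, (v τ - w τ) * (sw τ * iw τ)| := by
  have hA : IntervalIntegrable
      (fun τ => (β - v τ) * (sv τ * iv τ - sw τ * iw τ) - γ * (iv τ - iw τ)) volume 0 r :=
    ((intervalIntegrable_const.sub (hv.intervalIntegrable 0 r)).mul_continuousOn
      ((hsolv.1.mul hsolv.2.1).sub (hsolw.1.mul hsolw.2.1)).continuousOn).sub
      (((hsolv.2.1.sub hsolw.2.1).const_mul γ).intervalIntegrable _ _)
  rw [hsolv.2.2.2 r hr, hsolw.2.2.2 r hr, add_sub_add_left_eq_sub]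
  refine (abs_integral_sub_integral_le (f := fun τ => (β - v τ) * sv τ * iv τ - γ * iv τ)
    (g := fun τ => (β - w τ) * sw τ * iw τ - γ * iw τ)
    (B := fun τ => -((v τ - w τ) * (sw τ * iw τ))) hr
    ((hsolv.intervalIntegrable_infection hv 0 r).sub
      ((hsolv.2.1.const_mul γ).intervalIntegrable _ _))
    ((hsolw.intervalIntegrable_infection hw 0 r).sub
      ((hsolw.2.1.const_mul γ).intervalIntegrable _ _)) hA
    (((hv.intervalIntegrable 0 r).sub (hw.intervalIntegrable 0 r)).mul_continuousOn
      (hsolw.1.mul hsolw.2.1).continuousOn).neg fun τ => by ring).trans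
    (add_le_add ?_ (by rw [intervalIntegral.integral_neg, abs_neg]))
  rw [← intervalIntegral.integral_const_mul]
  refine integral_mono_on hr hA.abs
    ((((hsolv.1.sub hsolw.1).abs.add (hsolv.2.1.sub hsolw.2.1).abs).const_mul _).intervalIntegrable
      _ _) fun τ hτ => ?_
  calc _ ≤ |(β - v τ) * (sv τ * iv τ - sw τ * iw τ)| + |γ * (iv τ - iw τ)| := abs_sub _ _
    _ ≤ (|β| + umax) * (|sv τ - sw τ| + |iv τ - iw τ|) +
        γ * (|sv τ - sw τ| + |iv τ - iw τ|) := by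
        rw [abs_mul γ, abs_of_nonneg hγ]
        gcongr
        · exact hv.abs_sub_mul_le β τ (abs_mul_sub_mul_le (hsv τ hτ.1) (hiw τ hτ.1))
        · exact le_add_of_nonneg_left (abs_nonneg _)
    _ = _ := by ring

theorem abs_sub_le_of_abs_integral_le (hγ : 0 ≤ γ) (hv : IsControl umax v)
    (hw : IsControl umax w) (hsolv : SIRSol β γ v sv iv s₀ i₀)
    (hsolw : SIRSol β γ w sw iw s₀ i₀) (hsv : ∀ τ, 0 ≤ τ → |sv τ| ≤ 1)
    (hiw : ∀ τ, 0 ≤ τ → |iw τ| ≤ 1) {t ε : ℝ} (ht : 0 ≤ t)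
    (hE : ∀ r ∈ Icc 0 t, |∫ τ in 0..r, (v τ - w τ) * (sw τ * iw τ)| ≤ ε) :
    |iv t - iw t| ≤ 2 * ε * exp ((2 * (|β| + umax) + γ) * t) := by
  have hK : 0 ≤ 2 * (|β| + umax) + γ := by have := hv.umax_nonneg; positivity
  have hΔ : Continuous fun τ => |sv τ - sw τ| + |iv τ - iw τ| :=
    (hsolv.1.sub hsolw.1).abs.add (hsolv.2.1.sub hsolw.2.1).abs
  have hgronwall := le_mul_exp_of_le_add_mul_integral (C := 2 * ε) hK hΔ (fun r hr => by
      linarith [abs_sub_susceptible_le hv hw hsolv hsolw hsv hiw hr.1,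
        abs_sub_infected_le hγ hv hw hsolv hsolw hsv hiw hr.1, hE r hr]) t ⟨ht, le_rfl⟩
  rw [sub_zero] at hgronwall
  exact (le_add_of_nonneg_left (abs_nonneg _)).trans hgronwall

end

end SIRSol

namespace WeakStarLim

variable {umax : ℝ} {un : ℕ → ℝ → ℝ} {u : ℝ → ℝ}

theorem tendsto_setIntegral_Ioc (h : WeakStarLim un u) {g : ℝ → ℝ} {r : ℝ}
    (hg : IntegrableOn g (Ioc 0 r)) :
    Tendsto (fun n => ∫ t in Ioc 0 r, un n t * g t) atTop (𝓝 (∫ t in Ioc 0 r, u t * g t)) := by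
  have hrestrict : ∀ w : ℝ → ℝ,
      ∫ t in Ioi 0, w t * (Ioc 0 r).indicator g t = ∫ t in Ioc 0 r, w t * g t := fun w => by
    simp_rw [← indicator_mul_right]
    rw [setIntegral_indicator measurableSet_Ioc, inter_eq_right.2 Ioc_subset_Ioi_self]
  simpa only [hrestrict] using h _ (hg.integrable_indicator measurableSet_Ioc).integrableOn

theorem tendsto_integral_sub_mul (h : WeakStarLim un u) (hun : ∀ n, IsControl umax (un n))
    (hu : IsControl umax u) {f : ℝ → ℝ} (hf : Continuous f) {r : ℝ} (hr : 0 ≤ r) :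
    Tendsto (fun n => ∫ τ in 0..r, (un n τ - u τ) * f τ) atTop (𝓝 0) := by
  have hint : ∀ w, IsControl umax w → IntervalIntegrable (fun τ => w τ * f τ) volume 0 r :=
    fun w hw => (hw.intervalIntegrable 0 r).mul_continuousOn hf.continuousOn
  have hsplit : ∀ n, ∫ τ in 0..r, (un n τ - u τ) * f τ =
      (∫ τ in 0..r, un n τ * f τ) - ∫ τ in 0..r, u τ * f τ := fun n => by
    simp_rw [sub_mul]
    exact integral_sub (hint _ (hun n)) (hint _ hu)
  simp_rw [hsplit, intervalIntegral.integral_of_le hr]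
  exact tendsto_sub_nhds_zero_iff.2 (h.tendsto_setIntegral_Ioc
    (hf.continuousOn.integrableOn_Icc.mono_set Ioc_subset_Icc_self))

end WeakStarLim

theorem SIRSol.tendsto_infected_of_weakStarLim {β γ umax s₀ i₀ : ℝ} {un sn iN : ℕ → ℝ → ℝ}
    {u s i : ℝ → ℝ} (hγ : 0 ≤ γ) (hun : ∀ n, IsControl umax (un n)) (hu : IsControl umax u)
    (hsoln : ∀ n, SIRSol β γ (un n) (sn n) (iN n) s₀ i₀) (hsol : SIRSol β γ u s i s₀ i₀)
    (h₀ : (s₀, i₀) ∈ Triangle) (hweak : WeakStarLim un u) (t : ℝ) (ht : 0 ≤ t) :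
    Tendsto (fun n => iN n t) atTop (𝓝 (i t)) := by
  have hsi : Continuous fun τ => s τ * i τ := hsol.1.mul hsol.2.1
  have hunit := hsol.abs_le_one hγ hu h₀
  have hunif : TendstoUniformlyOn (fun n r => ∫ τ in 0..r, (un n τ - u τ) * (s τ * i τ)) 0
      atTop (Icc 0 t) := by
    refine tendstoUniformlyOn_of_lipschitzOnWith isCompact_Icc (K := umax.toNNReal)
      (fun n => lipschitzOnWith_integral (fun a b => ?_) fun τ hτ => ?_)
      fun r hr => hweak.tendsto_integral_sub_mul hun hu hsi hr.1
    · exact (((hun n).intervalIntegrable a b).sub (hu.intervalIntegrable a b)).mul_continuousOn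
        hsi.continuousOn
    · rw [abs_mul, Real.coe_toNNReal _ hu.umax_nonneg, ← mul_one umax, abs_mul]
      exact mul_le_mul ((hun n).abs_sub_le_of_isControl hu τ)
        (mul_le_one₀ (hunit τ hτ.1).1 (abs_nonneg _) (hunit τ hτ.1).2) (by positivity)
        hu.umax_nonneg
  rw [Metric.tendsto_nhds]
  intro ε hε
  set K := 2 * (|β| + umax) + γ
  have hδ : 0 < ε / (4 * exp (K * t)) := by positivity
  filter_upwards [Metric.tendstoUniformlyOn_iff.1 hunif _ hδ] with n hn
  rw [Real.dist_eq]
  calc |iN n t - i t| ≤ 2 * (ε / (4 * exp (K * t))) * exp (K * t) := by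
        refine (hsoln n).abs_sub_le_of_abs_integral_le hγ (hun n) hu hsol
          (fun τ hτ => ((hsoln n).abs_le_one hγ (hun n) h₀ τ hτ).1)
          (fun τ hτ => (hunit τ hτ).2) ht fun r hr => ?_
        simpa [dist_eq_norm] using (hn r hr).le
    _ = ε / 2 := by field_simp; ring
    _ < ε := by linarith

theorem CostT_mono {l1 l2 T T' : ℝ} {u i : ℝ → ℝ} (h : T ≤ T') :
    CostT l1 l2 T u i ≤ CostT l1 l2 T' u i :=
  lintegral_mono_set (Ioc_subset_Ioc_right h)

theorem Cost_eq_iSup_CostT (l1 l2 : ℝ) (u i : ℝ → ℝ) :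
    Cost l1 l2 u i = ⨆ M : ℕ, CostT l1 l2 M u i := by
  have hcover : ⋃ M : ℕ, Ioc (0 : ℝ) M = Ioi 0 :=
    iUnion_Ioc_eq_Ioi_self_iff.2 fun x _ => exists_nat_ge x
  rw [Cost, ← hcover, setLIntegral_iUnion_of_directed]
  · rfl
  · exact Monotone.directed_le fun M N hMN => Ioc_subset_Ioc_right (by exact_mod_cast hMN)

theorem CostT_eq_ofReal_integral {l1 l2 umax T : ℝ} {u i : ℝ → ℝ} (hl1 : 0 ≤ l1) (hl2 : 0 ≤ l2)
    (hu : IsControl umax u) (hi : Continuous i) (hi0 : ∀ t, 0 ≤ t → 0 ≤ i t) :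
    CostT l1 l2 T u i = ENNReal.ofReal (∫ t in Ioc 0 T, (l1 * u t + l2 * i t)) := by
  rw [CostT, ofReal_integral_eq_lintegral_ofReal]
  · exact ((hu.integrableOn measure_Ioc_lt_top.ne).const_mul l1).add
      ((hi.continuousOn.integrableOn_Icc.mono_set Ioc_subset_Icc_self).const_mul l2)
  · filter_upwards [ae_restrict_mem measurableSet_Ioc] with t ht
    exact add_nonneg (mul_nonneg hl1 (hu.2 t).1) (mul_nonneg hl2 (hi0 t ht.1.le))

theorem tendsto_CostT {l1 l2 umax T : ℝ} {un iN : ℕ → ℝ → ℝ} {u i : ℝ → ℝ} (hl1 : 0 ≤ l1)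
    (hl2 : 0 ≤ l2) (hweak : WeakStarLim un u) (hun : ∀ n, IsControl umax (un n))
    (hu : IsControl umax u) (hiN : ∀ n, Continuous (iN n)) (hi : Continuous i)
    (hiN01 : ∀ n t, 0 ≤ t → 0 ≤ iN n t ∧ iN n t ≤ 1) (hi0 : ∀ t, 0 ≤ t → 0 ≤ i t)
    (hlim : ∀ t, 0 ≤ t → Tendsto (fun n => iN n t) atTop (𝓝 (i t))) :
    Tendsto (fun n => CostT l1 l2 T (un n) (iN n)) atTop (𝓝 (CostT l1 l2 T u i)) := by
  have hsplit : ∀ w j : ℝ → ℝ, IsControl umax w → Continuous j →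
      ∫ t in Ioc 0 T, (l1 * w t + l2 * j t) =
        (∫ t in Ioc 0 T, w t * l1) + l2 * ∫ t in Ioc 0 T, j t := fun w j hw hj => by
    simp_rw [mul_comm l1]
    rw [integral_add ((hw.integrableOn measure_Ioc_lt_top.ne).mul_const l1)
      ((hj.continuousOn.integrableOn_Icc.mono_set Ioc_subset_Icc_self).const_mul l2),
      MeasureTheory.integral_const_mul]
  have hdom : Tendsto (fun n => ∫ t in Ioc 0 T, iN n t) atTop (𝓝 (∫ t in Ioc 0 T, i t)) := by
    refine tendsto_integral_of_dominated_convergence (fun _ => (1 : ℝ))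
      (fun n => (hiN n).aestronglyMeasurable) (integrableOn_const measure_Ioc_lt_top.ne)
      (fun n => ?_) ?_
    · filter_upwards [ae_restrict_mem measurableSet_Ioc] with t ht
      obtain ⟨h0, h1⟩ := hiN01 n t ht.1.le
      rw [Real.norm_eq_abs, abs_le]
      exact ⟨by linarith, h1⟩
    · filter_upwards [ae_restrict_mem measurableSet_Ioc] with t ht using hlim t ht.1.le
  simp_rw [CostT_eq_ofReal_integral hl1 hl2 (hun _) (hiN _) fun t ht => (hiN01 _ t ht).1,
    CostT_eq_ofReal_integral hl1 hl2 hu hi hi0, hsplit _ _ (hun _) (hiN _), hsplit u i hu hi]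
  exact ENNReal.tendsto_ofReal ((hweak.tendsto_setIntegral_Ioc
    (integrableOn_const measure_Ioc_lt_top.ne)).add (hdom.const_mul l2))

theorem statement13_general (β γ umax iM l1 l2 : ℝ) (hγ : 0 < γ)
    (hl1 : 0 < l1) (hl2 : 0 ≤ l2)
    (i₀ s₀ : ℝ) (hi₀ : i₀ ∈ Set.Ioo (0:ℝ) 1) (hs₀ : s₀ ∈ Set.Ioc (0:ℝ) (1 - i₀))
    (Tn : ℕ → ℝ)
    (hTtop : Filter.Tendsto Tn Filter.atTop Filter.atTop)
    (un : ℕ → ℝ → ℝ) (sn iN : ℕ → ℝ → ℝ) (u s i : ℝ → ℝ)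
    (hun : ∀ n, IsControl umax (un n)) (hu : IsControl umax u)
    (hsoln : ∀ n, SIRSol β γ (un n) (sn n) (iN n) s₀ i₀)
    (hsol : SIRSol β γ u s i s₀ i₀)
    (hadm : ∀ n, Admissible iM (iN n))
    (hweak : WeakStarLim un u) :
    Admissible iM i ∧
    Cost l1 l2 u i ≤
      Filter.liminf (fun n => CostT l1 l2 (Tn n) (un n) (iN n)) Filter.atTop := by
  have h₀ : (s₀, i₀) ∈ Triangle :=
    ⟨hs₀.1, by linarith [hs₀.2, hi₀.1], hi₀.1, hi₀.2.le, by linarith [hs₀.2]⟩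
  have hlim := SIRSol.tendsto_infected_of_weakStarLim hγ.le hun hu hsoln hsol h₀ hweak
  have hiN01 : ∀ n t, 0 ≤ t → 0 ≤ iN n t ∧ iN n t ≤ 1 := fun n t ht =>
    have h := (hsoln n).mem_triangle hγ.le (hun n) h₀ t ht
    ⟨h.2.2.1.le, h.2.2.2.1⟩
  refine ⟨fun t ht => le_of_tendsto (hlim t ht) (.of_forall fun n => hadm n t ht), ?_⟩
  rw [Cost_eq_iSup_CostT]
  refine iSup_le fun M => ?_
  calc CostT l1 l2 M u i
      = liminf (fun n => CostT l1 l2 M (un n) (iN n)) atTop :=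
        (tendsto_CostT hl1.le hl2 hweak hun hu (fun n => (hsoln n).2.1) hsol.2.1 hiN01
          (fun t ht => (hsol.mem_triangle hγ.le hu h₀ t ht).2.2.1.le) hlim).liminf_eq.symm
    _ ≤ liminf (fun n => CostT l1 l2 (Tn n) (un n) (iN n)) atTop :=
        liminf_le_liminf (hTtop.eventually_ge_atTop (M : ℝ) |>.mono fun n hn => CostT_mono hn)

/-- Γ-liminf inequality: for controls `u_n` vanishing after `T_n`, feasible and weakly*
converging to `u`, the limit control is feasible and the liminf of the finite-horizon
costs dominates the infinite-horizon cost of `u`. -/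
theorem statement13 (β γ umax iM l1 l2 : ℝ) (hβ : 0 < β) (hγ : 0 < γ)
    (humax : 0 < umax) (humaxβ : umax < β) (hiM : iM ∈ Set.Ioo (0:ℝ) 1)
    (hl1 : 0 < l1) (hl2 : 0 ≤ l2)
    (i₀ s₀ : ℝ) (hi₀ : i₀ ∈ Set.Ioo (0:ℝ) 1) (hs₀ : s₀ ∈ Set.Ioc (0:ℝ) (1 - i₀))
    (Tn : ℕ → ℝ) (hTn : StrictMono Tn) (hTn0 : ∀ n, 0 < Tn n)
    (hTtop : Filter.Tendsto Tn Filter.atTop Filter.atTop)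
    (un : ℕ → ℝ → ℝ) (sn iN : ℕ → ℝ → ℝ) (u s i : ℝ → ℝ)
    (hun : ∀ n, IsControl umax (un n)) (hu : IsControl umax u)
    (hsoln : ∀ n, SIRSol β γ (un n) (sn n) (iN n) s₀ i₀)
    (hsol : SIRSol β γ u s i s₀ i₀)
    (hadm : ∀ n, Admissible iM (iN n))
    (hzero : ∀ n, ∀ᵐ t : ℝ, t ∈ Set.Ioi (Tn n) → un n t = 0)
    (hweak : WeakStarLim un u) :
    Admissible iM i ∧
    Cost l1 l2 u i ≤
      Filter.liminf (fun n => CostT l1 l2 (Tn n) (un n) (iN n)) Filter.atTop :=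
  statement13_general β γ umax iM l1 l2 hγ hl1 hl2 i₀ s₀ hi₀ hs₀ Tn hTtop un sn iN u s i hun hu
    hsoln hsol hadm hweak
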